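/- arXiv:2202.03360 — 4 statements merged into one kernel-verified Lean document; each statement's English description precedes it below -/
import Mathlib

section
/- For every augmented state ŝ = (z,k,k̂,v,t,c) ∈ Ŝ, the augmented transition function is a valid probability distribution over successor states: P̂(ŝ,ŝ') ≥ 0 for all ŝ' ∈ Ŝ, and ∑_{ŝ'∈Ŝ} P̂(ŝ,ŝ') = 1. -/
open Finset

/-- Perfect-perception states `s = (z, k, t, c)`.
Turn-flag encoding: `(0 : Fin 3)` is turn 1, `1` is turn 2, `2` is turn 3. -/
abbrev PState (Z C : Type*) (K : ℕ) := Z × Fin K × Fin 3 × C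

/-- Augmented (DNN-perception) states `sHat = (z, k, k̂, v, t, c)`. -/
abbrev AState (Z C V : Type*) (K : ℕ) := Z × Fin K × Fin K × V × Fin 3 × C

/-- The augmented transition function `P̂` of the DNN-perception pDTMC. -/
noncomputable def Phat {Z C V : Type*} {K : ℕ}
    [DecidableEq Z] [DecidableEq C] [DecidableEq V]
    (P : PState Z C K → PState Z C K → ℝ)
    (p : Fin K → Fin K → V → ℝ) (x : Z → Fin K → V → C → C → ℝ) :
    AState Z C V K → AState Z C V K → ℝ
  | (z, k, kh, v, t, c), (z', k', kh', v', t', c') =>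
    if t = 0 then (if kh' = kh ∧ v' = v then P (z, k, 0, c) (z', k', t', c') else 0)
    else if t = 1 then P (z, k, 1, c) (z', k', t', c') * p k' kh' v'
    else if z' = z ∧ k' = k ∧ kh' = kh ∧ v' = v ∧ t' = 0 then x z kh v c c' else 0

private lemma sum_ite_const {α : Type*} [Fintype α] (Q : Prop) [Decidable Q] (f : α → ℝ) :
    (∑ a : α, if Q then f a else 0) = if Q then ∑ a : α, f a else 0 := by
  split <;> simp

/-- For every augmented state `sHat`, the augmented transition function is a
valid probability distribution over successor states. -/
theorem stmt0 {Z C V : Type*} {K : ℕ}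
    [Fintype Z] [Nonempty Z] [DecidableEq Z]
    [Fintype C] [Nonempty C] [DecidableEq C]
    [Fintype V] [Nonempty V] [DecidableEq V]
    (hK : 1 ≤ K)
    (P : PState Z C K → PState Z C K → ℝ)
    (hPnn : ∀ s s', 0 ≤ P s s')
    (hPsum : ∀ s, ∑ s', P s s' = 1)
    (hPturn : ∀ (z : Z) (k : Fin K) (t : Fin 3) (c : C)
        (z' : Z) (k' : Fin K) (t' : Fin 3) (c' : C),
      0 < P (z, k, t, c) (z', k', t', c') →
        (t = 0 → k' = k ∧ c' = c ∧ t' ≠ 2) ∧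
        (t = 1 → z' = z ∧ c' = c ∧ t' = 2) ∧
        (t = 2 → z' = z ∧ k' = k ∧ t' = 0))
    (p : Fin K → Fin K → V → ℝ)
    (hpnn : ∀ k kh v, 0 ≤ p k kh v)
    (hpsum : ∀ k, ∑ kh, ∑ v, p k kh v = 1)
    (x : Z → Fin K → V → C → C → ℝ)
    (hx0 : ∀ z kh v c c', 0 ≤ x z kh v c c')
    (hx1 : ∀ z kh v c c', x z kh v c c' ≤ 1)
    (hxsum : ∀ z kh v c, ∑ c', x z kh v c c' = 1)
    (sHat : AState Z C V K) :
    (∀ sHat', 0 ≤ Phat P p x sHat sHat') ∧ ∑ sHat', Phat P p x sHat sHat' = 1 := by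
  obtain ⟨z, k, kh, v, t, c⟩ := sHat
  constructor
  · rintro ⟨z', k', kh', v', t', c'⟩
    simp only [Phat]
    split_ifs
    · exact hPnn _ _
    · exact le_refl 0
    · exact mul_nonneg (hPnn _ _) (hpnn _ _ _)
    · exact hx0 _ _ _ _ _
    · exact le_refl 0
  · by_cases h0 : t = 0
    · subst h0
      simp only [Phat, Fintype.sum_prod_type, if_pos rfl]
      simp only [ite_and, sum_ite_const, Finset.sum_ite_eq' Finset.univ,
        Finset.mem_univ, if_true]
      have := hPsum (z, k, 0, c)
      simp only [Fintype.sum_prod_type] at this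
      exact this
    by_cases h1 : t = 1
    · subst h1
      simp only [Phat, Fintype.sum_prod_type, if_neg (by decide : (1:Fin 3) ≠ 0), eq_self_iff_true, if_true]
      have key : ∀ z' k', (∑ kh', ∑ v', ∑ t', ∑ c',
          P (z, k, 1, c) (z', k', t', c') * p k' kh' v') =
          ∑ t', ∑ c', P (z, k, 1, c) (z', k', t', c') := by
        intro z' k'
        simp only [← Finset.sum_mul, ← Finset.mul_sum]
        rw [hpsum k', mul_one]
      simp only [key]
      have := hPsum (z, k, 1, c)
      simp only [Fintype.sum_prod_type] at this
      exact this
    · simp only [Phat, Fintype.sum_prod_type, if_neg h0, if_neg h1]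
      simp only [ite_and, sum_ite_const, Finset.sum_ite_eq' Finset.univ,
        Finset.mem_univ, if_true]
      exact hxsum z kh v c
end

section
/- Assume the consistency condition: for all z ∈ Z, k ∈ Fin K, c, c' ∈ C, P((z,k,3,c),(z,k,1,c')) = ∑_{k̂∈Fin K, v∈V} p(k,k̂,v)·x(z,k̂,v,c,c'). Then for every m ∈ ℕ, every sequence of perfect-perception states s₀, s₁, …, s_m ∈ S with s_i = (z_i,k_i,t_i,c_i) such that t₀ ≠ 3, and every k̂₀ ∈ Fin K and v₀ ∈ V, the path probability ∏_{i=0}^{m-1} P(s_i, s_{i+1}) equals the sum, over all sequences of augmented states ŝ₀, ŝ₁, …, ŝ_m ∈ Ŝ whose componentwise projections (dropping the k̂ and v components) equal s₀, …, s_m and with ŝ₀ = (z₀,k₀,k̂₀,v₀,t₀,c₀), of ∏_{i=0}^{m-1} P̂(ŝ_i, ŝ_{i+1}). -/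
open Finset

/-- Projection dropping the `k̂` and `v` components of an augmented state. -/
def projState {Z C V : Type*} {K : ℕ} : AState Z C V K → PState Z C K
  | (z, k, _, _, t, c) => (z, k, t, c)

/-!
The lifts of a path are indexed by their label sequences `(k̂ᵢ, vᵢ)`, and the sum over them is
peeled off one step at a time. A turn-1 step (flag `0`) keeps the label and a turn-2 step
(flag `1`) draws a fresh one with weight `p(k, ·)`, after which the turn-3 step (flag `2`)
contributes `x` for that label; averaging over the label with weights `p(k, ·)` gives the
perfect-perception controller probability, by the consistency condition. So the induction
carries two claims together: for paths not starting at turn 3 the lift sum equals the path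
probability for every initial label, and for all paths its `p(k₀, ·)`-average does.
-/

section

variable {Z C V : Type*} {K : ℕ}

def pathProb {S : Type*} (Q : S → S → ℝ) {m : ℕ} (σ : Fin (m + 1) → S) : ℝ :=
  ∏ i : Fin m, Q (σ i.castSucc) (σ i.succ)

theorem pathProb_zero {S : Type*} (Q : S → S → ℝ) (σ : Fin 1 → S) : pathProb Q σ = 1 := by
  simp [pathProb]

theorem pathProb_succ {S : Type*} (Q : S → S → ℝ) {m : ℕ} (σ : Fin (m + 2) → S) :
    pathProb Q σ = Q (σ 0) (σ 1) * pathProb Q (Fin.tail σ) := by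
  simp [pathProb, Fin.prod_univ_succ, Fin.tail]

def liftState (s : PState Z C K) (a : Fin K × V) : AState Z C V K :=
  (s.1, s.2.1, a.1, a.2, s.2.2.1, s.2.2.2)

theorem liftState_projState (s : AState Z C V K) :
    liftState (projState s) (s.2.2.1, s.2.2.2.1) = s :=
  rfl

theorem projState_liftState (s : PState Z C K) (a : Fin K × V) :
    projState (liftState s a) = s :=
  rfl

section Lifts

variable [DecidableEq Z] [DecidableEq C] [DecidableEq V]
  (P : PState Z C K → PState Z C K → ℝ) (p : Fin K → Fin K → V → ℝ)
  (x : Z → Fin K → V → C → C → ℝ)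

theorem Phat_liftState_of_turn_zero {s : PState Z C K} (hs : s.2.2.1 = 0)
    (s' : PState Z C K) (a b : Fin K × V) :
    Phat P p x (liftState s a) (liftState s' b) = if b = a then P s s' else 0 := by
  obtain ⟨z, k, t, c⟩ := s
  obtain ⟨z', k', t', c'⟩ := s'
  obtain ⟨kh, v⟩ := a
  obtain ⟨kh', v'⟩ := b
  simp only at hs
  subst hs
  simp only [Phat, liftState, Prod.mk.injEq]
  split_ifs <;> grind

theorem Phat_liftState_of_turn_one {s : PState Z C K} (hs : s.2.2.1 = 1)
    (s' : PState Z C K) (a b : Fin K × V) :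
    Phat P p x (liftState s a) (liftState s' b) = P s s' * p s'.2.1 b.1 b.2 := by
  obtain ⟨z, k, t, c⟩ := s
  simp only at hs
  subst hs
  simp [Phat, liftState]

theorem Phat_liftState_of_turn_two {s : PState Z C K} (hs : s.2.2.1 = 2)
    (s' : PState Z C K) (a b : Fin K × V) :
    Phat P p x (liftState s a) (liftState s' b) =
      if s'.1 = s.1 ∧ s'.2.1 = s.2.1 ∧ s'.2.2.1 = 0 then
        (if b = a then x s.1 a.1 a.2 s.2.2.2 s'.2.2.2 else 0)
      else 0 := by
  obtain ⟨z, k, t, c⟩ := s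
  obtain ⟨z', k', t', c'⟩ := s'
  obtain ⟨kh, v⟩ := a
  obtain ⟨kh', v'⟩ := b
  simp only at hs
  subst hs
  simp only [Phat, liftState, Prod.mk.injEq]
  split_ifs <;> grind

variable [Fintype V]

noncomputable def liftSum {m : ℕ} (σ : Fin (m + 1) → PState Z C K) (a : Fin K × V) : ℝ :=
  ∑ τ : Fin m → Fin K × V,
    pathProb (Phat P p x) fun i => liftState (σ i) ((Fin.cons a τ : Fin (m + 1) → Fin K × V) i)

theorem liftSum_zero (σ : Fin 1 → PState Z C K) (a : Fin K × V) : liftSum P p x σ a = 1 := by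
  simp [liftSum, pathProb_zero]

theorem liftSum_succ {m : ℕ} (σ : Fin (m + 2) → PState Z C K) (a : Fin K × V) :
    liftSum P p x σ a =
      ∑ b, Phat P p x (liftState (σ 0) a) (liftState (σ 1) b) * liftSum P p x (Fin.tail σ) b := by
  rw [liftSum, ← (Fin.consEquiv fun _ : Fin (m + 1) => Fin K × V).sum_comp,
    Fintype.sum_prod_type]
  refine sum_congr rfl fun b _ => ?_
  rw [liftSum, mul_sum]
  refine sum_congr rfl fun τ _ => ?_
  rw [pathProb_succ]
  rfl

end Lifts

section TurnStructure

variable (P : PState Z C K → PState Z C K → ℝ)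

theorem P_eq_zero_of_turn_zero_of_turn_two (hPnn : ∀ s s', 0 ≤ P s s')
    (hPturn : ∀ (z : Z) (k : Fin K) (t : Fin 3) (c : C)
        (z' : Z) (k' : Fin K) (t' : Fin 3) (c' : C),
      0 < P (z, k, t, c) (z', k', t', c') →
        (t = 0 → k' = k ∧ c' = c ∧ t' ≠ 2) ∧
        (t = 1 → z' = z ∧ c' = c ∧ t' = 2) ∧
        (t = 2 → z' = z ∧ k' = k ∧ t' = 0))
    (s s' : PState Z C K) (hs : s.2.2.1 = 0) (hs' : s'.2.2.1 = 2) : P s s' = 0 := by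
  by_contra hne
  exact ((hPturn _ _ _ _ _ _ _ _ ((hPnn s s').lt_of_ne' hne)).1 hs).2.2 hs'

theorem P_eq_zero_of_turn_two (hPnn : ∀ s s', 0 ≤ P s s')
    (hPturn : ∀ (z : Z) (k : Fin K) (t : Fin 3) (c : C)
        (z' : Z) (k' : Fin K) (t' : Fin 3) (c' : C),
      0 < P (z, k, t, c) (z', k', t', c') →
        (t = 0 → k' = k ∧ c' = c ∧ t' ≠ 2) ∧
        (t = 1 → z' = z ∧ c' = c ∧ t' = 2) ∧
        (t = 2 → z' = z ∧ k' = k ∧ t' = 0))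
    (s s' : PState Z C K) (hs : s.2.2.1 = 2)
    (hs' : ¬(s'.1 = s.1 ∧ s'.2.1 = s.2.1 ∧ s'.2.2.1 = 0)) : P s s' = 0 := by
  by_contra hne
  exact hs' ((hPturn _ _ _ _ _ _ _ _ ((hPnn s s').lt_of_ne' hne)).2.2 hs)

variable [Fintype V] (p : Fin K → Fin K → V → ℝ) (x : Z → Fin K → V → C → C → ℝ)

theorem P_eq_sum_of_turn_two
    (hcons : ∀ (z : Z) (k : Fin K) (c c' : C),
      P (z, k, 2, c) (z, k, 0, c') = ∑ kh, ∑ v, p k kh v * x z kh v c c')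
    {s s' : PState Z C K} (hs : s.2.2.1 = 2)
    (hs' : s'.1 = s.1 ∧ s'.2.1 = s.2.1 ∧ s'.2.2.1 = 0) :
    P s s' = ∑ b : Fin K × V, p s.2.1 b.1 b.2 * x s.1 b.1 b.2 s.2.2.2 s'.2.2.2 := by
  obtain ⟨z, k, t, c⟩ := s
  obtain ⟨z', k', t', c'⟩ := s'
  obtain ⟨rfl, rfl, rfl⟩ := hs'
  simp only at hs
  subst hs
  rw [hcons, Fintype.sum_prod_type]

theorem sum_mul_const_of_sum_eq_one (hpsum : ∀ k, ∑ kh, ∑ v, p k kh v = 1) (k : Fin K) (r : ℝ) :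
    ∑ b : Fin K × V, p k b.1 b.2 * r = r := by
  rw [← sum_mul, Fintype.sum_prod_type, hpsum, one_mul]

end TurnStructure

section PathProbability

variable [DecidableEq Z] [DecidableEq C] [DecidableEq V] [Fintype V]
  (P : PState Z C K → PState Z C K → ℝ) (p : Fin K → Fin K → V → ℝ)
  (x : Z → Fin K → V → C → C → ℝ)

theorem liftSum_succ_of_turn_ne_two
    (hP02 : ∀ s s' : PState Z C K, s.2.2.1 = 0 → s'.2.2.1 = 2 → P s s' = 0) {m : ℕ}
    (hexact : ∀ σ : Fin (m + 1) → PState Z C K, (σ 0).2.2.1 ≠ 2 →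
      ∀ a, liftSum P p x σ a = pathProb P σ)
    (haverage : ∀ σ : Fin (m + 1) → PState Z C K,
      ∑ b : Fin K × V, p (σ 0).2.1 b.1 b.2 * liftSum P p x σ b = pathProb P σ)
    (σ : Fin (m + 2) → PState Z C K) (h0 : (σ 0).2.2.1 ≠ 2) (a : Fin K × V) :
    liftSum P p x σ a = pathProb P σ := by
  have htail : Fin.tail σ 0 = σ 1 := rfl
  rw [liftSum_succ, pathProb_succ]
  rcases (by omega : (σ 0).2.2.1 = 0 ∨ (σ 0).2.2.1 = 1) with h0 | h0
  · simp only [Phat_liftState_of_turn_zero P p x h0, ite_mul, zero_mul, sum_ite_eq',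
      mem_univ, if_true]
    by_cases h1 : (σ 1).2.2.1 = 2
    · rw [hP02 _ _ h0 h1, zero_mul, zero_mul]
    · rw [hexact (Fin.tail σ) (htail ▸ h1) a]
  · simp only [Phat_liftState_of_turn_one P p x h0, mul_assoc, ← mul_sum]
    rw [← haverage (Fin.tail σ), htail]

theorem sum_mul_liftSum_succ_of_turn_two
    (hP2 : ∀ s s' : PState Z C K, s.2.2.1 = 2 →
      ¬(s'.1 = s.1 ∧ s'.2.1 = s.2.1 ∧ s'.2.2.1 = 0) → P s s' = 0)
    (hcons : ∀ (z : Z) (k : Fin K) (c c' : C),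
      P (z, k, 2, c) (z, k, 0, c') = ∑ kh, ∑ v, p k kh v * x z kh v c c') {m : ℕ}
    (hexact : ∀ σ : Fin (m + 1) → PState Z C K, (σ 0).2.2.1 ≠ 2 →
      ∀ a, liftSum P p x σ a = pathProb P σ)
    (σ : Fin (m + 2) → PState Z C K) (h0 : (σ 0).2.2.1 = 2) :
    ∑ b : Fin K × V, p (σ 0).2.1 b.1 b.2 * liftSum P p x σ b = pathProb P σ := by
  have htail : Fin.tail σ 0 = σ 1 := rfl
  simp only [liftSum_succ, Phat_liftState_of_turn_two P p x h0, pathProb_succ]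
  by_cases hnext : (σ 1).1 = (σ 0).1 ∧ (σ 1).2.1 = (σ 0).2.1 ∧ (σ 1).2.2.1 = 0
  · have h1 : (Fin.tail σ 0).2.2.1 ≠ 2 := by simp [htail, hnext.2.2]
    simp only [if_pos hnext, ite_mul, zero_mul, sum_ite_eq', mem_univ, if_true,
      hexact _ h1, P_eq_sum_of_turn_two P p x hcons h0 hnext, sum_mul, mul_assoc]
  · simp [if_neg hnext, hP2 _ _ h0 hnext]

theorem liftSum_eq_pathProb_and_sum_mul_liftSum_eq_pathProb
    (hP02 : ∀ s s' : PState Z C K, s.2.2.1 = 0 → s'.2.2.1 = 2 → P s s' = 0)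
    (hP2 : ∀ s s' : PState Z C K, s.2.2.1 = 2 →
      ¬(s'.1 = s.1 ∧ s'.2.1 = s.2.1 ∧ s'.2.2.1 = 0) → P s s' = 0)
    (hpsum : ∀ k, ∑ kh, ∑ v, p k kh v = 1)
    (hcons : ∀ (z : Z) (k : Fin K) (c c' : C),
      P (z, k, 2, c) (z, k, 0, c') = ∑ kh, ∑ v, p k kh v * x z kh v c c') (m : ℕ) :
    (∀ σ : Fin (m + 1) → PState Z C K, (σ 0).2.2.1 ≠ 2 →
      ∀ a, liftSum P p x σ a = pathProb P σ) ∧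
    ∀ σ : Fin (m + 1) → PState Z C K,
      ∑ b : Fin K × V, p (σ 0).2.1 b.1 b.2 * liftSum P p x σ b = pathProb P σ := by
  induction m with
  | zero =>
    simp only [liftSum_zero, pathProb_zero]
    exact ⟨fun _ _ _ => trivial, fun σ => sum_mul_const_of_sum_eq_one p hpsum _ 1⟩
  | succ m ih =>
    have hexact := liftSum_succ_of_turn_ne_two P p x hP02 ih.1 ih.2
    refine ⟨hexact, fun σ => ?_⟩
    by_cases h0 : (σ 0).2.2.1 = 2
    · exact sum_mul_liftSum_succ_of_turn_two P p x hP2 hcons ih.1 σ h0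
    · simp only [hexact σ h0, sum_mul_const_of_sum_eq_one p hpsum]

end PathProbability

theorem sum_lifts_eq_liftSum [Fintype Z] [Fintype C] [DecidableEq Z] [DecidableEq C]
    [DecidableEq V] [Fintype V] (P : PState Z C K → PState Z C K → ℝ)
    (p : Fin K → Fin K → V → ℝ) (x : Z → Fin K → V → C → C → ℝ) {m : ℕ}
    (σ : Fin (m + 1) → PState Z C K) (a : Fin K × V) :
    ∑ σL ∈ univ.filter (fun σL : Fin (m + 1) → AState Z C V K =>
        (∀ i, projState (σL i) = σ i) ∧ σL 0 = liftState (σ 0) a),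
      pathProb (Phat P p x) σL = liftSum P p x σ a := by
  let labels (σL : Fin (m + 1) → AState Z C V K) (i : Fin m) : Fin K × V :=
    ((σL i.succ).2.2.1, (σL i.succ).2.2.2.1)
  let lift (τ : Fin m → Fin K × V) (j : Fin (m + 1)) : AState Z C V K :=
    liftState (σ j) ((Fin.cons a τ : Fin (m + 1) → Fin K × V) j)
  have lift_labels : ∀ σL ∈ univ.filter (fun σL : Fin (m + 1) → AState Z C V K =>
      (∀ i, projState (σL i) = σ i) ∧ σL 0 = liftState (σ 0) a), lift (labels σL) = σL := by
    intro σL hσL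
    obtain ⟨hproj, h0⟩ := (mem_filter.1 hσL).2
    funext j
    cases j using Fin.cases with
    | zero => exact h0.symm
    | succ i => rw [← liftState_projState (σL i.succ), hproj]; rfl
  rw [liftSum]
  exact sum_nbij' labels lift (fun _ _ => mem_univ _)
    (fun τ _ => mem_filter.2 ⟨mem_univ _, fun _ => projState_liftState _ _, rfl⟩) lift_labels
    (fun _ _ => rfl) fun σL hσL => congrArg _ (lift_labels σL hσL).symm

end

theorem stmt6_general {Z C V : Type*} {K : ℕ}
    [Fintype Z] [DecidableEq Z]
    [Fintype C] [DecidableEq C]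
    [Fintype V] [DecidableEq V]
    (P : PState Z C K → PState Z C K → ℝ)
    (hPnn : ∀ s s', 0 ≤ P s s')
    (hPturn : ∀ (z : Z) (k : Fin K) (t : Fin 3) (c : C)
        (z' : Z) (k' : Fin K) (t' : Fin 3) (c' : C),
      0 < P (z, k, t, c) (z', k', t', c') →
        (t = 0 → k' = k ∧ c' = c ∧ t' ≠ 2) ∧
        (t = 1 → z' = z ∧ c' = c ∧ t' = 2) ∧
        (t = 2 → z' = z ∧ k' = k ∧ t' = 0))
    (p : Fin K → Fin K → V → ℝ)
    (hpsum : ∀ k, ∑ kh, ∑ v, p k kh v = 1)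
    (x : Z → Fin K → V → C → C → ℝ)
    (hcons : ∀ (z : Z) (k : Fin K) (c c' : C),
      P (z, k, 2, c) (z, k, 0, c') = ∑ kh, ∑ v, p k kh v * x z kh v c c')
    (m : ℕ) (σ : Fin (m + 1) → PState Z C K)
    (ht0 : (σ 0).2.2.1 ≠ 2)
    (kh0 : Fin K) (v0 : V) :
    ∏ i : Fin m, P (σ i.castSucc) (σ i.succ) =
      ∑ σL ∈ Finset.univ.filter (fun σL : Fin (m + 1) → AState Z C V K =>
          (∀ i, projState (σL i) = σ i) ∧
          σL 0 = ((σ 0).1, (σ 0).2.1, kh0, v0, (σ 0).2.2.1, (σ 0).2.2.2)),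
        ∏ i : Fin m, Phat P p x (σL i.castSucc) (σL i.succ) := by
  have hlift := (liftSum_eq_pathProb_and_sum_mul_liftSum_eq_pathProb P p x
    (P_eq_zero_of_turn_zero_of_turn_two P hPnn hPturn) (P_eq_zero_of_turn_two P hPnn hPturn)
    hpsum hcons m).1 σ ht0 (kh0, v0)
  exact ((sum_lifts_eq_liftSum P p x σ (kh0, v0)).trans hlift).symm

/-- under the consistency condition relating the perfect-perception
controller parameters to the DNN-perception ones, every path probability of the
perfect-perception chain (starting in a state with turn flag `t₀ ≠ 3`, i.e. `≠ 2` in our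
encoding) equals the total probability of all its lifts in the augmented chain that start
from the given initial DNN output `k̂₀` and verification result `v₀`. -/
theorem stmt6 {Z C V : Type*} {K : ℕ}
    [Fintype Z] [Nonempty Z] [DecidableEq Z]
    [Fintype C] [Nonempty C] [DecidableEq C]
    [Fintype V] [Nonempty V] [DecidableEq V]
    (hK : 1 ≤ K)
    (P : PState Z C K → PState Z C K → ℝ)
    (hPnn : ∀ s s', 0 ≤ P s s')
    (hPsum : ∀ s, ∑ s', P s s' = 1)
    (hPturn : ∀ (z : Z) (k : Fin K) (t : Fin 3) (c : C)
        (z' : Z) (k' : Fin K) (t' : Fin 3) (c' : C),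
      0 < P (z, k, t, c) (z', k', t', c') →
        (t = 0 → k' = k ∧ c' = c ∧ t' ≠ 2) ∧
        (t = 1 → z' = z ∧ c' = c ∧ t' = 2) ∧
        (t = 2 → z' = z ∧ k' = k ∧ t' = 0))
    (p : Fin K → Fin K → V → ℝ)
    (hpnn : ∀ k kh v, 0 ≤ p k kh v)
    (hpsum : ∀ k, ∑ kh, ∑ v, p k kh v = 1)
    (x : Z → Fin K → V → C → C → ℝ)
    (hx0 : ∀ z kh v c c', 0 ≤ x z kh v c c')
    (hx1 : ∀ z kh v c c', x z kh v c c' ≤ 1)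
    (hxsum : ∀ z kh v c, ∑ c', x z kh v c c' = 1)
    (hcons : ∀ (z : Z) (k : Fin K) (c c' : C),
      P (z, k, 2, c) (z, k, 0, c') = ∑ kh, ∑ v, p k kh v * x z kh v c c')
    (m : ℕ) (σ : Fin (m + 1) → PState Z C K)
    (ht0 : (σ 0).2.2.1 ≠ 2)
    (kh0 : Fin K) (v0 : V) :
    ∏ i : Fin m, P (σ i.castSucc) (σ i.succ) =
      ∑ σL ∈ Finset.univ.filter (fun σL : Fin (m + 1) → AState Z C V K =>
          (∀ i, projState (σL i) = σ i) ∧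
          σL 0 = ((σ 0).1, (σ 0).2.1, kh0, v0, (σ 0).2.2.1, (σ 0).2.2.2)),
        ∏ i : Fin m, Phat P p x (σL i.castSucc) (σL i.succ) :=
  stmt6_general P hPnn hPturn p hpsum x hcons m σ ht0 kh0 v0
end

section
/- Fix z ∈ Z, k₀, k̂₀ ∈ Fin K, v₀ ∈ V and c ∈ C, and suppose p(k₀,k̂₀,v₀) > 0. Suppose x : Z → Fin K → V → C → C → ℝ satisfies 0 ≤ x(z,k̂,v,c,c') ≤ 1 for all arguments, and x̄ : Z → Fin K → C → C → ℝ satisfies, for all c' ∈ C, both the mixture equation x̄(z,k₀,c,c') = ∑_{k̂∈Fin K, v∈V} p(k₀,k̂,v)·x(z,k̂,v,c,c') and the identity x̄(z,k₀,c,c') = α(c,c')·p(k₀,k̂₀,v₀) + ∑_{(k̂,v)≠(k̂₀,v₀)} p(k₀,k̂,v), where α : C × C → ℝ with α(c,c') ∈ [0,1]. Then the outgoing controller probabilities satisfy ∑_{c'∈C} x(z,k̂₀,v₀,c,c') ≥ ∑_{c'∈C} α(c,c'). -/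
open Finset

/-- if the perfect-perception parameters `x̄` are simultaneously the
mixture of the DNN-perception parameters `x` and of the special form
`α(c,c')·p(k₀,k̂₀,v₀) + ∑_{(k̂,v)≠(k̂₀,v₀)} p(k₀,k̂,v)`, then
the outgoing controller probabilities satisfy
`∑_{c'} x(z,k̂₀,v₀,c,c') ≥ ∑_{c'} α(c,c')`. -/
theorem stmt12 {Z C V : Type*} {K : ℕ}
    [Fintype Z] [Nonempty Z] [Fintype C] [Nonempty C]
    [Fintype V] [Nonempty V] [DecidableEq V]
    (hK : 1 ≤ K)
    (p : Fin K → Fin K → V → ℝ)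
    (hpnn : ∀ k kh v, 0 ≤ p k kh v)
    (hpsum : ∀ k, ∑ kh, ∑ v, p k kh v = 1)
    (z : Z) (k₀ kh₀ : Fin K) (v₀ : V) (c : C)
    (hp₀ : 0 < p k₀ kh₀ v₀)
    (x : Z → Fin K → V → C → C → ℝ)
    (hx : ∀ z' kh v c₁ c', 0 ≤ x z' kh v c₁ c' ∧ x z' kh v c₁ c' ≤ 1)
    (xbar : Z → Fin K → C → C → ℝ)
    (α : C × C → ℝ)
    (hα : ∀ c', 0 ≤ α (c, c') ∧ α (c, c') ≤ 1)
    (hmix : ∀ c', xbar z k₀ c c' = ∑ kh, ∑ v, p k₀ kh v * x z kh v c c')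
    (hid : ∀ c', xbar z k₀ c c' =
      α (c, c') * p k₀ kh₀ v₀ +
        ∑ khv ∈ (Finset.univ : Finset (Fin K × V)).erase (kh₀, v₀), p k₀ khv.1 khv.2) :
    ∑ c', α (c, c') ≤ ∑ c', x z kh₀ v₀ c c' := by
  apply Finset.sum_le_sum
  intro c' _
  have h := (hid c').symm.trans (hmix c')
  have hsplit : ∑ kh, ∑ v, p k₀ kh v * x z kh v c c'
      = p k₀ kh₀ v₀ * x z kh₀ v₀ c c' +
        ∑ khv ∈ (Finset.univ : Finset (Fin K × V)).erase (kh₀, v₀),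
          p k₀ khv.1 khv.2 * x z khv.1 khv.2 c c' := by
    rw [← Finset.sum_product']
    exact (Finset.add_sum_erase _ (fun khv : Fin K × V => p k₀ khv.1 khv.2 * x z khv.1 khv.2 c c')
      (Finset.mem_univ (kh₀, v₀))).symm
  rw [hsplit] at h
  have hrest : ∑ khv ∈ (Finset.univ : Finset (Fin K × V)).erase (kh₀, v₀),
      p k₀ khv.1 khv.2 * x z khv.1 khv.2 c c'
      ≤ ∑ khv ∈ (Finset.univ : Finset (Fin K × V)).erase (kh₀, v₀), p k₀ khv.1 khv.2 := by
    apply Finset.sum_le_sum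
    intro khv _
    calc p k₀ khv.1 khv.2 * x z khv.1 khv.2 c c'
        ≤ p k₀ khv.1 khv.2 * 1 := by
          exact mul_le_mul_of_nonneg_left (hx z khv.1 khv.2 c c').2 (hpnn _ _ _)
      _ = p k₀ khv.1 khv.2 := mul_one _
  have key : α (c, c') * p k₀ kh₀ v₀ ≤ p k₀ kh₀ v₀ * x z kh₀ v₀ c c' := by linarith
  rw [mul_comm] at key
  exact le_of_mul_le_mul_left key hp₀
end

section
/- Fix z ∈ Z, k₀, k̂₀ ∈ Fin K, v₀ ∈ V and c ∈ C, and suppose p(k₀,k̂₀,v₀) > 0. Let x̄ : Z → Fin K → C → C → ℝ satisfy, for all c' ∈ C, x̄(z,k₀,c,c') = α(c,c')·p(k₀,k̂₀,v₀) + ∑_{(k̂,v)≠(k̂₀,v₀)} p(k₀,k̂,v), where α : C × C → ℝ with α(c,c') ∈ [0,1], and suppose ∑_{c'∈C} α(c,c') > 1. Then there exists no x : Z → Fin K → V → C → C → ℝ with 0 ≤ x(z,k̂,v,c,c') ≤ 1 and ∑_{c'∈C} x(z,k̂,v,c,c') = 1 for all arguments, such that x̄(z,k₀,c,c') = ∑_{k̂∈Fin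 K, v∈V} p(k₀,k̂,v)·x(z,k̂,v,c,c') for all c' ∈ C. -/
open Finset

/-- if `x̄(z,k₀,c,·)` has the special form
`α(c,c')·p(k₀,k̂₀,v₀) + ∑_{(k̂,v)≠(k̂₀,v₀)} p(k₀,k̂,v)` with `∑_{c'} α(c,c') > 1`, then
no valid instantiation of the DNN-perception controller parameters realises `x̄` as a
mixture. -/
theorem stmt13 {Z C V : Type*} {K : ℕ}
    [Fintype Z] [Nonempty Z] [Fintype C] [Nonempty C]
    [Fintype V] [Nonempty V] [DecidableEq V]
    (hK : 1 ≤ K)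
    (p : Fin K → Fin K → V → ℝ)
    (hpnn : ∀ k kh v, 0 ≤ p k kh v)
    (hpsum : ∀ k, ∑ kh, ∑ v, p k kh v = 1)
    (z : Z) (k₀ kh₀ : Fin K) (v₀ : V) (c : C)
    (hp₀ : 0 < p k₀ kh₀ v₀)
    (xbar : Z → Fin K → C → C → ℝ)
    (α : C × C → ℝ)
    (hα : ∀ c', 0 ≤ α (c, c') ∧ α (c, c') ≤ 1)
    (hid : ∀ c', xbar z k₀ c c' =
      α (c, c') * p k₀ kh₀ v₀ +
        ∑ khv ∈ (Finset.univ : Finset (Fin K × V)).erase (kh₀, v₀), p k₀ khv.1 khv.2)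
    (hαsum : 1 < ∑ c', α (c, c')) :
    ¬ ∃ x : Z → Fin K → V → C → C → ℝ,
        (∀ z' kh v c₁ c', 0 ≤ x z' kh v c₁ c' ∧ x z' kh v c₁ c' ≤ 1) ∧
        (∀ z' kh v c₁, ∑ c', x z' kh v c₁ c' = 1) ∧
        (∀ c', xbar z k₀ c c' = ∑ kh, ∑ v, p k₀ kh v * x z kh v c c') := by
  rintro ⟨x, hx01, hxsum, hmix⟩
  set S : ℝ := ∑ khv ∈ (Finset.univ : Finset (Fin K × V)).erase (kh₀, v₀), p k₀ khv.1 khv.2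
    with hS
  have hSnn : 0 ≤ S := Finset.sum_nonneg fun khv _ => hpnn _ _ _
  have hsplit : p k₀ kh₀ v₀ + S = 1 := by
    have h : (∑ khv : Fin K × V, p k₀ khv.1 khv.2) = 1 := by
      rw [← hpsum k₀]; exact Finset.sum_product _ _ _
    have h2 := Finset.add_sum_erase Finset.univ
      (fun khv : Fin K × V => p k₀ khv.1 khv.2) (Finset.mem_univ (kh₀, v₀))
    simp only [] at h2
    rw [hS]; rw [h] at h2; linarith
  -- sum of mixture over c' equals 1
  have h1 : ∑ c', xbar z k₀ c c' = 1 := by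
    calc ∑ c', xbar z k₀ c c' = ∑ c', ∑ kh, ∑ v, p k₀ kh v * x z kh v c c' := by
          simp_rw [hmix]
      _ = ∑ kh, ∑ v, ∑ c', p k₀ kh v * x z kh v c c' := by
          rw [Finset.sum_comm]
          exact Finset.sum_congr rfl fun kh _ => Finset.sum_comm
      _ = ∑ kh, ∑ v, p k₀ kh v := by
          refine Finset.sum_congr rfl fun kh _ => Finset.sum_congr rfl fun v _ => ?_
          rw [← Finset.mul_sum, hxsum, mul_one]
      _ = 1 := hpsum k₀
  have h2 : ∑ c', xbar z k₀ c c'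
      = (∑ c', α (c, c')) * p k₀ kh₀ v₀ + (Fintype.card C : ℝ) * S := by
    simp_rw [hid]
    rw [Finset.sum_add_distrib, ← Finset.sum_mul, Finset.sum_const, nsmul_eq_mul]
    simp [Finset.card_univ]
  have hC : (1 : ℝ) ≤ (Fintype.card C : ℝ) := by
    exact_mod_cast Fintype.card_pos
  have hgt : 1 < (∑ c', α (c, c')) * p k₀ kh₀ v₀ + (Fintype.card C : ℝ) * S := by
    have h3 : p k₀ kh₀ v₀ < (∑ c', α (c, c')) * p k₀ kh₀ v₀ := by
      nlinarith
    nlinarith [mul_le_mul_of_nonneg_right hC hSnn]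
  rw [h1] at h2
  linarith
end
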